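/- arXiv:1905.11980 — 4 statements merged into one kernel-verified Lean document; each statement's English description precedes it below -/
import Mathlib

section
/- Let K ∈ ℝ, N > 1, and set κ := K/(N-1). Fix x₀ ≤ x₁. The function a ↦ s_κ(x₁ - a)/s_κ(x₀ - a) is non-decreasing on [0, x₀] (assuming x₁ - a < π/√κ when κ > 0), where s_κ(θ) = sin(√κ θ)/√κ for κ > 0, s_0(θ) = θ, and s_κ(θ) = sinh(√(-κ) θ)/√(-κ) for κ < 0. -/
open Real

/-- The comparison function `s_κ`. -/
noncomputable def sk (κ θ : ℝ) : ℝ :=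
  if 0 < κ then Real.sin (Real.sqrt κ * θ) / Real.sqrt κ
  else if κ = 0 then θ
  else Real.sinh (Real.sqrt (-κ) * θ) / Real.sqrt (-κ)

/-- for `κ := K/(N-1)` and fixed `x₀ ≤ x₁`, the function
`a ↦ s_κ(x₁ - a)/s_κ(x₀ - a)` is non-decreasing on `[0, x₀]`
(with `x₁ - a < π/√κ` when `κ > 0`). -/
theorem ratio_monotone_in_a (K N : ℝ) (hN : 1 < N) (x₀ x₁ : ℝ) (hx : x₀ ≤ x₁)
    (κ : ℝ) (hκ : κ = K / (N - 1))
    (hdom : 0 < κ → x₁ < Real.pi / Real.sqrt κ) :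
    ∀ a₁ a₂, 0 ≤ a₁ → a₁ ≤ a₂ → a₂ < x₀ →
      sk κ (x₁ - a₁) / sk κ (x₀ - a₁) ≤ sk κ (x₁ - a₂) / sk κ (x₀ - a₂) := by
  intro a₁ a₂ ha₁ ha h2
  have h10 : a₁ < x₀ := lt_of_le_of_lt ha h2
  have hx₀ : 0 < x₀ := lt_of_le_of_lt ha₁ h10
  rcases lt_trichotomy κ 0 with hneg | hzero | hpos
  · -- κ < 0 : sinh case
    have hu : 0 < Real.sqrt (-κ) := Real.sqrt_pos.2 (by linarith)
    set u := Real.sqrt (-κ) with hu'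
    have hsk : ∀ θ : ℝ, sk κ θ = Real.sinh (u * θ) / u := by
      intro θ
      simp only [sk, if_neg (not_lt.2 hneg.le), if_neg hneg.ne, hu']
    rw [hsk, hsk, hsk, hsk]
    have hd1 : 0 < Real.sinh (u * (x₀ - a₁)) / u :=
      div_pos (Real.sinh_pos_iff.2 (by nlinarith)) hu
    have hd2 : 0 < Real.sinh (u * (x₀ - a₂)) / u :=
      div_pos (Real.sinh_pos_iff.2 (by nlinarith)) hu
    rw [div_le_div_iff₀ hd1 hd2]
    have prod : ∀ A B : ℝ, Real.sinh A * Real.sinh B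
        = (Real.cosh (A + B) - Real.cosh (A - B)) / 2 := by
      intro A B; rw [Real.cosh_add, Real.cosh_sub]; ring
    have key : Real.sinh (u * (x₁ - a₁)) * Real.sinh (u * (x₀ - a₂))
        ≤ Real.sinh (u * (x₁ - a₂)) * Real.sinh (u * (x₀ - a₁)) := by
      have h1 := prod (u * (x₁ - a₁)) (u * (x₀ - a₂))
      have h2' := prod (u * (x₁ - a₂)) (u * (x₀ - a₁))
      have e1 : u * (x₁ - a₁) + u * (x₀ - a₂) = u * (x₁ - a₂) + u * (x₀ - a₁) := by ring
      have e2 : u * (x₁ - a₁) - u * (x₀ - a₂) = u * ((x₁ - x₀) + (a₂ - a₁)) := by ring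
      have e3 : u * (x₁ - a₂) - u * (x₀ - a₁) = u * ((x₁ - x₀) - (a₂ - a₁)) := by ring
      rw [e1, e2] at h1
      rw [e3] at h2'
      have hmono : Real.cosh (u * ((x₁ - x₀) - (a₂ - a₁)))
          ≤ Real.cosh (u * ((x₁ - x₀) + (a₂ - a₁))) := by
        rw [Real.cosh_le_cosh]
        rw [abs_of_nonneg (by nlinarith : (0:ℝ) ≤ u * ((x₁ - x₀) + (a₂ - a₁)))]
        rw [abs_le]
        constructor <;> nlinarith
      linarith
    calc Real.sinh (u * (x₁ - a₁)) / u * (Real.sinh (u * (x₀ - a₂)) / u)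
        = Real.sinh (u * (x₁ - a₁)) * Real.sinh (u * (x₀ - a₂)) / (u * u) := by ring
      _ ≤ Real.sinh (u * (x₁ - a₂)) * Real.sinh (u * (x₀ - a₁)) / (u * u) := by
          gcongr
      _ = Real.sinh (u * (x₁ - a₂)) / u * (Real.sinh (u * (x₀ - a₁)) / u) := by ring
  · -- κ = 0
    have hsk : ∀ θ : ℝ, sk κ θ = θ := by
      intro θ; simp [sk, hzero]
    rw [hsk, hsk, hsk, hsk]
    rw [div_le_div_iff₀ (by linarith) (by linarith)]
    nlinarith
  · -- κ > 0 : sin case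
    have hu : 0 < Real.sqrt κ := Real.sqrt_pos.2 hpos
    set u := Real.sqrt κ with hu'
    have hsk : ∀ θ : ℝ, sk κ θ = Real.sin (u * θ) / u := by
      intro θ; simp only [sk, if_pos hpos, hu']
    rw [hsk, hsk, hsk, hsk]
    have hx1pi : u * x₁ < Real.pi := by
      have := hdom hpos
      rw [lt_div_iff₀ hu] at this
      linarith [this, mul_comm x₁ u]
    have hsinpos : ∀ a : ℝ, 0 ≤ a → a < x₀ → 0 < Real.sin (u * (x₀ - a)) / u := by
      intro a h0 hlt
      apply div_pos _ hu
      apply Real.sin_pos_of_pos_of_lt_pi (by nlinarith)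
      nlinarith
    have hd1 := hsinpos a₁ ha₁ h10
    have hd2 := hsinpos a₂ (le_trans ha₁ ha) h2
    rw [div_le_div_iff₀ hd1 hd2]
    have prod : ∀ A B : ℝ, Real.sin A * Real.sin B
        = (Real.cos (A - B) - Real.cos (A + B)) / 2 := by
      intro A B; rw [Real.cos_sub, Real.cos_add]; ring
    have key : Real.sin (u * (x₁ - a₁)) * Real.sin (u * (x₀ - a₂))
        ≤ Real.sin (u * (x₁ - a₂)) * Real.sin (u * (x₀ - a₁)) := by
      have h1 := prod (u * (x₁ - a₁)) (u * (x₀ - a₂))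
      have h2' := prod (u * (x₁ - a₂)) (u * (x₀ - a₁))
      have e1 : u * (x₁ - a₁) + u * (x₀ - a₂) = u * (x₁ - a₂) + u * (x₀ - a₁) := by ring
      have e2 : u * (x₁ - a₁) - u * (x₀ - a₂) = u * ((x₁ - x₀) + (a₂ - a₁)) := by ring
      have e3 : u * (x₁ - a₂) - u * (x₀ - a₁) = u * ((x₁ - x₀) - (a₂ - a₁)) := by ring
      rw [e1, e2] at h1
      rw [e3] at h2'
      have habs : Real.cos (u * ((x₁ - x₀) - (a₂ - a₁)))
          = Real.cos (|u * ((x₁ - x₀) - (a₂ - a₁))|) := (Real.cos_abs _).symm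
      have hmono : Real.cos (u * ((x₁ - x₀) + (a₂ - a₁)))
          ≤ Real.cos (|u * ((x₁ - x₀) - (a₂ - a₁))|) := by
        apply Real.cos_le_cos_of_nonneg_of_le_pi (abs_nonneg _)
        · nlinarith
        · rw [abs_le]; constructor <;> nlinarith
      rw [← habs] at hmono
      linarith
    calc Real.sin (u * (x₁ - a₁)) / u * (Real.sin (u * (x₀ - a₂)) / u)
        = Real.sin (u * (x₁ - a₁)) * Real.sin (u * (x₀ - a₂)) / (u * u) := by ring
      _ ≤ Real.sin (u * (x₁ - a₂)) * Real.sin (u * (x₀ - a₁)) / (u * u) := by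
          gcongr
      _ = Real.sin (u * (x₁ - a₂)) / u * (Real.sin (u * (x₀ - a₁)) / u) := by ring
end

section
/- Let K ∈ ℝ, N > 1, 0 < D ≤ D_{K,N}, κ := K/(N-1). Any continuous positive function h on (0,D) satisfying (s_κ(D-x₁)/s_κ(D-x₀))^{N-1} ≤ h(x₁)/h(x₀) ≤ (s_κ(x₁)/s_κ(x₀))^{N-1} for all 0 < x₀ ≤ x₁ < D is locally Lipschitz on (0,D). -/
open Real

/-- The MCP(K,N) density condition on `(0, D)` (condition of Lemma 3.2):
two-sided ratio bounds with `κ = K/(N-1)`. -/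
def mcpCond (K N D : ℝ) (h : ℝ → ℝ) : Prop :=
  ∀ x₀ x₁ : ℝ, 0 < x₀ → x₀ ≤ x₁ → x₁ < D →
    (sk (K / (N - 1)) (D - x₁) / sk (K / (N - 1)) (D - x₀)) ^ (N - 1) ≤ h x₁ / h x₀ ∧
    h x₁ / h x₀ ≤ (sk (K / (N - 1)) x₁ / sk (K / (N - 1)) x₀) ^ (N - 1)

/-- The generalized cotangent `cot_{K,N}`. -/
noncomputable def cotKN (K N x : ℝ) : ℝ :=
  if 0 < K then Real.sqrt (K * (N - 1)) * Real.cos (Real.sqrt (K / (N - 1)) * x) /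
      Real.sin (Real.sqrt (K / (N - 1)) * x)
  else if K = 0 then (N - 1) / x
  else Real.sqrt (-K * (N - 1)) * Real.cosh (Real.sqrt (-K / (N - 1)) * x) /
      Real.sinh (Real.sqrt (-K / (N - 1)) * x)

lemma sk_contDiff (κ : ℝ) : ContDiff ℝ 1 (sk κ) := by
  unfold sk
  split_ifs with h1 h2
  · exact (Real.contDiff_sin.comp (contDiff_const.mul contDiff_id)).div_const _
  · exact contDiff_id
  · exact (Real.contDiff_sinh.comp (contDiff_const.mul contDiff_id)).div_const _

lemma sk_pos {κ t : ℝ} (ht : 0 < t) (ht2 : 0 < κ → t < Real.pi / Real.sqrt κ) :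
    0 < sk κ t := by
  unfold sk
  split_ifs with h1 h2
  · have hs : 0 < Real.sqrt κ := Real.sqrt_pos.2 h1
    have hlt : Real.sqrt κ * t < Real.pi := by
      have h' := ht2 h1
      have := (lt_div_iff₀ hs).1 h'
      linarith [this]
    exact div_pos (Real.sin_pos_of_pos_of_lt_pi (mul_pos hs ht) hlt) hs
  · simpa using ht
  · have hκ : 0 < -κ := by
      push_neg at h1
      have : κ < 0 := lt_of_le_of_ne h1 h2
      linarith
    have hs : 0 < Real.sqrt (-κ) := Real.sqrt_pos.2 hκ
    exact div_pos (Real.sinh_pos_iff.2 (mul_pos hs ht)) hs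

/-- any continuous positive function on `(0,D)` satisfying the
MCP(K,N) density condition is locally Lipschitz on `(0,D)`. -/
theorem mcpCond_locallyLipschitz (K N D : ℝ) (hN : 1 < N) (hD : 0 < D)
    (hDKN : 0 < K → D ≤ Real.pi / Real.sqrt (K / (N - 1)))
    (h : ℝ → ℝ) (hcont : ContinuousOn h (Set.Ioo 0 D))
    (hpos : ∀ x ∈ Set.Ioo 0 D, 0 < h x)
    (hmcp : mcpCond K N D h) :
    ∀ x ∈ Set.Ioo 0 D, ∃ C : NNReal, ∃ t ∈ nhdsWithin x (Set.Ioo 0 D),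
      LipschitzOnWith C h t := by
  intro x hx
  obtain ⟨hx0, hxD⟩ := hx
  have hN1 : (0:ℝ) < N - 1 := by linarith
  set κ := K / (N - 1) with hκdef
  have hbound : ∀ t ∈ Set.Ioo (0:ℝ) D, 0 < sk κ t := by
    intro t ht
    refine sk_pos ht.1 (fun hκ => ?_)
    have hK : 0 < K := by
      by_contra hK
      push_neg at hK
      have : κ ≤ 0 := div_nonpos_of_nonpos_of_nonneg hK hN1.le
      linarith
    exact lt_of_lt_of_le ht.2 (hDKN hK)
  set f : ℝ → ℝ := fun t => sk κ t ^ (N - 1) with hfdef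
  set g : ℝ → ℝ := fun t => sk κ (D - t) ^ (N - 1) with hgdef
  have hDx : D - x ∈ Set.Ioo (0:ℝ) D := ⟨by linarith, by linarith⟩
  have hfC : ContDiffAt ℝ 1 f x := by
    rw [hfdef]
    exact ((sk_contDiff κ).contDiffAt).rpow_const_of_ne (ne_of_gt (hbound x ⟨hx0, hxD⟩))
  have hgC : ContDiffAt ℝ 1 g x := by
    rw [hgdef]
    exact (((sk_contDiff κ).comp (contDiff_const.sub contDiff_id)).contDiffAt).rpow_const_of_ne
      (ne_of_gt (hbound _ hDx))
  obtain ⟨C₁, t₁, ht₁, hlip₁⟩ := hfC.exists_lipschitzOnWith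
  obtain ⟨C₂, t₂, ht₂, hlip₂⟩ := hgC.exists_lipschitzOnWith
  obtain ⟨ε₁, hε₁, hball₁⟩ := Metric.mem_nhds_iff.1 ht₁
  obtain ⟨ε₂, hε₂, hball₂⟩ := Metric.mem_nhds_iff.1 ht₂
  set ε : ℝ := min (min ε₁ ε₂ / 2) (min x (D - x) / 2) with hεdef
  have hε : 0 < ε :=
    lt_min (half_pos (lt_min hε₁ hε₂)) (half_pos (lt_min hx0 (by linarith)))
  set s := Set.Icc (x - ε) (x + ε) with hsdef
  have hεx : ε ≤ min x (D - x) / 2 := min_le_right _ _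
  have hεx1 : min x (D - x) ≤ x := min_le_left _ _
  have hεx2 : min x (D - x) ≤ D - x := min_le_right _ _
  have hε12 : ε ≤ min ε₁ ε₂ / 2 := min_le_left _ _
  have hε1' : min ε₁ ε₂ ≤ ε₁ := min_le_left _ _
  have hε2' : min ε₁ ε₂ ≤ ε₂ := min_le_right _ _
  have hsub : s ⊆ Set.Ioo 0 D := by
    intro y hy
    obtain ⟨hy1, hy2⟩ := hy
    exact ⟨by linarith, by linarith⟩
  have hdist : ∀ y ∈ s, |y - x| ≤ ε := by
    intro y hy
    exact abs_le.2 ⟨by linarith [hy.1], by linarith [hy.2]⟩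
  have hsub₁ : s ⊆ t₁ := by
    intro y hy
    apply hball₁
    rw [Metric.mem_ball, Real.dist_eq]
    linarith [hdist y hy]
  have hsub₂ : s ⊆ t₂ := by
    intro y hy
    apply hball₂
    rw [Metric.mem_ball, Real.dist_eq]
    linarith [hdist y hy]
  have hDsub : ∀ y ∈ s, D - y ∈ Set.Ioo (0:ℝ) D := by
    intro y hy
    exact ⟨by linarith [(hsub hy).2], by linarith [(hsub hy).1]⟩
  have hsc : IsCompact s := isCompact_Icc
  have hsne : s.Nonempty := ⟨x, ⟨by linarith, by linarith⟩⟩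
  -- maximum of h on s
  obtain ⟨xM, hxM, hM⟩ := hsc.exists_isMaxOn hsne (hcont.mono hsub)
  set H := h xM with hHdef
  have hHpos : 0 < H := hpos xM (hsub hxM)
  have hHle : ∀ y ∈ s, h y ≤ H := fun y hy => hM hy
  -- positive lower bounds for f and g on s
  have hfc : ContinuousOn f s := by
    rw [hfdef]
    exact ContinuousOn.rpow_const ((sk_contDiff κ).continuous.continuousOn)
      (fun y hy => Or.inl (ne_of_gt (hbound y (hsub hy))))
  have hgc : ContinuousOn g s := by
    rw [hgdef]
    exact ContinuousOn.rpow_const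
      (((sk_contDiff κ).continuous.comp (continuous_const.sub continuous_id)).continuousOn)
      (fun y hy => Or.inl (ne_of_gt (hbound _ (hDsub y hy))))
  obtain ⟨y₁, hy₁, hm₁⟩ := hsc.exists_isMinOn hsne hfc
  obtain ⟨y₂, hy₂, hm₂⟩ := hsc.exists_isMinOn hsne hgc
  set m := min (f y₁) (g y₂) with hmdef
  have hfy₁ : 0 < f y₁ := by
    simp only [hfdef]
    exact Real.rpow_pos_of_pos (hbound _ (hsub hy₁)) _
  have hgy₂ : 0 < g y₂ := by
    simp only [hgdef]
    exact Real.rpow_pos_of_pos (hbound _ (hDsub _ hy₂)) _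
  have hmpos : 0 < m := lt_min hfy₁ hgy₂
  have hmf : ∀ y ∈ s, m ≤ f y := fun y hy => le_trans (min_le_left _ _) (hm₁ hy)
  have hmg : ∀ y ∈ s, m ≤ g y := fun y hy => le_trans (min_le_right _ _) (hm₂ hy)
  set L : ℝ := (C₁ : ℝ) + (C₂ : ℝ) with hLdef
  have hL : 0 ≤ L := add_nonneg C₁.2 C₂.2
  have hCr : 0 ≤ H * L / m := div_nonneg (mul_nonneg hHpos.le hL) hmpos.le
  -- key estimate
  have key : ∀ y ∈ s, ∀ z ∈ s, y ≤ z → |h y - h z| ≤ H * L / m * (z - y) := by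
    intro y hy z hz hyz
    have hyI := hsub hy
    have hzI := hsub hz
    have hhy := hpos y hyI
    have hhz := hpos z hzI
    have hfy : 0 < f y := by
      simp only [hfdef]; exact Real.rpow_pos_of_pos (hbound _ hyI) _
    have hgy : 0 < g y := by
      simp only [hgdef]; exact Real.rpow_pos_of_pos (hbound _ (hDsub _ hy)) _
    obtain ⟨hlow, hhigh⟩ := hmcp y z hyI.1 hyz hzI.2
    rw [← hκdef] at hlow hhigh
    have e1 : (sk κ z / sk κ y) ^ (N - 1) = f z / f y := by
      simp only [hfdef]
      exact Real.div_rpow (hbound _ hzI).le (hbound _ hyI).le _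
    have e2 : (sk κ (D - z) / sk κ (D - y)) ^ (N - 1) = g z / g y := by
      simp only [hgdef]
      exact Real.div_rpow (hbound _ (hDsub _ hz)).le (hbound _ (hDsub _ hy)).le _
    rw [e1] at hhigh
    rw [e2] at hlow
    have h1 : h z * f y ≤ f z * h y := (div_le_div_iff₀ hhy hfy).1 hhigh
    have h2 : g z * h y ≤ h z * g y := (div_le_div_iff₀ hgy hhy).1 hlow
    -- Lipschitz bounds for f and g
    have hd1 : |f z - f y| ≤ (C₁ : ℝ) * (z - y) := by
      have := hlip₁.dist_le_mul y (hsub₁ hy) z (hsub₁ hz)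
      rw [Real.dist_eq, Real.dist_eq, abs_sub_comm] at this
      have hyz' : |y - z| = z - y := by
        rw [abs_sub_comm]; exact abs_of_nonneg (by linarith)
      rw [hyz'] at this
      exact this
    have hd2 : |g z - g y| ≤ (C₂ : ℝ) * (z - y) := by
      have := hlip₂.dist_le_mul y (hsub₂ hy) z (hsub₂ hz)
      rw [Real.dist_eq, Real.dist_eq, abs_sub_comm] at this
      have hyz' : |y - z| = z - y := by
        rw [abs_sub_comm]; exact abs_of_nonneg (by linarith)
      rw [hyz'] at this
      exact this
    have hzy : (0:ℝ) ≤ z - y := by linarith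
    -- first bound: h z - h y
    have step1 : h y * (f z - f y) ≤ H * ((C₁ : ℝ) * (z - y)) := by
      calc h y * (f z - f y) ≤ h y * |f z - f y| :=
            mul_le_mul_of_nonneg_left (le_abs_self _) hhy.le
        _ ≤ H * ((C₁ : ℝ) * (z - y)) :=
            mul_le_mul (hHle y hy) hd1 (abs_nonneg _) hHpos.le
    have step2 : (h z - h y) * f y ≤ H * ((C₁ : ℝ) * (z - y)) := by linarith [h1, step1]
    have k1 : (h z - h y) * m ≤ H * ((C₁ : ℝ) * (z - y)) := by
      rcases le_total (h z - h y) 0 with hc | hc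
      · have h0 : (0:ℝ) ≤ H * ((C₁ : ℝ) * (z - y)) :=
          mul_nonneg hHpos.le (mul_nonneg C₁.2 hzy)
        have := mul_nonpos_iff.2 (Or.inr ⟨hc, hmpos.le⟩)
        linarith
      · have := mul_le_mul_of_nonneg_left (hmf y hy) hc
        linarith [step2]
    -- second bound: h y - h z
    have step1' : h z * (g y - g z) ≤ H * ((C₂ : ℝ) * (z - y)) := by
      calc h z * (g y - g z) ≤ h z * |g y - g z| :=
            mul_le_mul_of_nonneg_left (le_abs_self _) hhz.le
        _ ≤ H * ((C₂ : ℝ) * (z - y)) := by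
            rw [abs_sub_comm]
            exact mul_le_mul (hHle z hz) hd2 (abs_nonneg _) hHpos.le
    have step2' : (h y - h z) * g z ≤ H * ((C₂ : ℝ) * (z - y)) := by linarith [h2, step1']
    have hgz : 0 < g z := by
      simp only [hgdef]; exact Real.rpow_pos_of_pos (hbound _ (hDsub _ hz)) _
    have k2 : (h y - h z) * m ≤ H * ((C₂ : ℝ) * (z - y)) := by
      rcases le_total (h y - h z) 0 with hc | hc
      · have h0 : (0:ℝ) ≤ H * ((C₂ : ℝ) * (z - y)) :=
          mul_nonneg hHpos.le (mul_nonneg C₂.2 hzy)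
        have := mul_nonpos_iff.2 (Or.inr ⟨hc, hmpos.le⟩)
        linarith
      · have := mul_le_mul_of_nonneg_left (hmg z hz) hc
        linarith [step2']
    -- combine
    have hzero1 : (0:ℝ) ≤ H * ((C₁ : ℝ) * (z - y)) :=
      mul_nonneg hHpos.le (mul_nonneg C₁.2 hzy)
    have hzero2 : (0:ℝ) ≤ H * ((C₂ : ℝ) * (z - y)) :=
      mul_nonneg hHpos.le (mul_nonneg C₂.2 hzy)
    have heq : H * L / m * (z - y) = H * (L * (z - y)) / m := by ring
    have b1 : h z - h y ≤ H * L / m * (z - y) := by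
      rw [heq, le_div_iff₀ hmpos, hLdef]
      linarith [k1, hzero2]
    have b2 : h y - h z ≤ H * L / m * (z - y) := by
      rw [heq, le_div_iff₀ hmpos, hLdef]
      linarith [k2, hzero1]
    rw [abs_le]
    constructor <;> linarith
  refine ⟨⟨H * L / m, hCr⟩, s, ?_, ?_⟩
  · exact mem_nhdsWithin_of_mem_nhds (Icc_mem_nhds (by linarith) (by linarith))
  · apply LipschitzOnWith.of_dist_le_mul
    intro y hy z hz
    rw [Real.dist_eq, Real.dist_eq]
    change |h y - h z| ≤ H * L / m * |y - z|
    rcases le_total y z with hyz | hyz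
    · have habs : |y - z| = z - y := by
        rw [abs_sub_comm]; exact abs_of_nonneg (by linarith)
      rw [habs]
      exact key y hy z hz hyz
    · have habs : |y - z| = y - z := abs_of_nonneg (by linarith)
      rw [habs, abs_sub_comm]
      exact key z hz y hy hyz
end

section
/- Let K ∈ ℝ, N > 1, 0 < D ≤ D_{K,N}, κ := K/(N-1). Suppose h : (0,D) → (0,∞) is differentiable. Then h satisfies the MCP(K,N) density condition if and only if -h(x)·cot_{K,N}(D-x) ≤ h'(x) ≤ h(x)·cot_{K,N}(x) for all x ∈ (0,D), where cot_{K,N}(x) := √(K(N-1))·cot(√(K/(N-1))·x) if K > 0, (N-1)/x if K = 0, and √(-K(N-1))·coth(√(-K/(N-1))·x) if K < 0. -/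
open Real

lemma deriv_nonneg_of_monotoneOn' {f : ℝ → ℝ} {a b x c : ℝ} (hx : x ∈ Set.Ioo a b)
    (hm : MonotoneOn f (Set.Ioo a b)) (hd : HasDerivAt f c x) : 0 ≤ c := by
  have h1 : Filter.Tendsto (slope f x) (nhdsWithin x (Set.Ioi x)) (nhds c) :=
    (hasDerivAt_iff_tendsto_slope.1 hd).mono_left
      (nhdsWithin_mono x fun y hy => by simpa using ne_of_gt hy)
  refine ge_of_tendsto h1 ?_
  filter_upwards [Ioo_mem_nhdsGT_of_mem ⟨le_refl x, hx.2⟩] with y hy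
  rw [slope_def_field]
  apply div_nonneg
  · have := hm hx ⟨hx.1.trans hy.1, hy.2⟩ hy.1.le
    linarith
  · linarith [hy.1]

lemma deriv_nonpos_of_antitoneOn' {f : ℝ → ℝ} {a b x c : ℝ} (hx : x ∈ Set.Ioo a b)
    (hm : AntitoneOn f (Set.Ioo a b)) (hd : HasDerivAt f c x) : c ≤ 0 := by
  have h0 : MonotoneOn (fun y => -f y) (Set.Ioo a b) := fun u hu v hv huv => by
    simpa using hm hu hv huv
  have := deriv_nonneg_of_monotoneOn' hx h0 hd.neg
  linarith

lemma sk_pos_s7 (K N x : ℝ) (hN : 1 < N) (hx : 0 < x)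
    (hπ : 0 < K → Real.sqrt (K / (N - 1)) * x < Real.pi) : 0 < sk (K / (N - 1)) x := by
  have hN1 : (0:ℝ) < N - 1 := by linarith
  rcases lt_trichotomy K 0 with hK | hK | hK
  · have hκ : K / (N - 1) < 0 := div_neg_of_neg_of_pos hK hN1
    rw [sk, if_neg (by linarith), if_neg (by linarith)]
    have hs : 0 < Real.sqrt (-(K / (N - 1))) := Real.sqrt_pos.2 (by linarith)
    exact div_pos (Real.sinh_pos_iff.2 (by positivity)) hs
  · subst hK
    simp only [sk, zero_div, lt_irrefl, if_neg (lt_irrefl (0:ℝ)), if_pos rfl]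
    exact hx
  · have hκ : 0 < K / (N - 1) := div_pos hK hN1
    rw [sk, if_pos hκ]
    have hs : 0 < Real.sqrt (K / (N - 1)) := Real.sqrt_pos.2 hκ
    exact div_pos (Real.sin_pos_of_pos_of_lt_pi (by positivity) (hπ hK)) hs

lemma hasDerivAt_log_sin_div (s x : ℝ) (hs : 0 < s) (hsin : 0 < Real.sin (s * x)) :
    HasDerivAt (fun y => Real.log (Real.sin (s * y) / s))
      (s * Real.cos (s * x) / Real.sin (s * x)) x := by
  have h1 : HasDerivAt (fun y => s * y) s x := by
    simpa using (hasDerivAt_id x).const_mul s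
  have h2 : HasDerivAt (fun y => Real.sin (s * y) / s)
      (Real.cos (s * x) * s / s) x := ((Real.hasDerivAt_sin (s * x)).comp x h1).div_const s
  have h3 := h2.log (by positivity)
  convert h3 using 1
  field_simp

lemma hasDerivAt_log_sinh_div (s x : ℝ) (hs : 0 < s) (hsinh : 0 < Real.sinh (s * x)) :
    HasDerivAt (fun y => Real.log (Real.sinh (s * y) / s))
      (s * Real.cosh (s * x) / Real.sinh (s * x)) x := by
  have h1 : HasDerivAt (fun y => s * y) s x := by
    simpa using (hasDerivAt_id x).const_mul s
  have h2 : HasDerivAt (fun y => Real.sinh (s * y) / s)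
      (Real.cosh (s * x) * s / s) x := ((Real.hasDerivAt_sinh (s * x)).comp x h1).div_const s
  have h3 := h2.log (by positivity)
  convert h3 using 1
  field_simp

set_option maxHeartbeats 1000000 in

lemma mul_div_div_cancel' (a b c d : ℝ) (hd : d ≠ 0) : a * d * b / c / d = a * b / c := by
  rcases eq_or_ne c 0 with rfl | hc
  · simp
  · field_simp

lemma hasDerivAt_log_sk (K N x : ℝ) (hN : 1 < N) (hx : 0 < x)
    (hπ : 0 < K → Real.sqrt (K / (N - 1)) * x < Real.pi) :
    HasDerivAt (fun y => Real.log (sk (K / (N - 1)) y)) (cotKN K N x / (N - 1)) x := by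
  have hN1 : (0:ℝ) < N - 1 := by linarith
  rcases lt_trichotomy K 0 with hK | hK | hK
  · -- K < 0
    have hκ : K / (N - 1) < 0 := div_neg_of_neg_of_pos hK hN1
    have hs : 0 < Real.sqrt (-(K / (N - 1))) := Real.sqrt_pos.2 (by linarith)
    have hfun : (fun y => Real.log (sk (K / (N - 1)) y))
        = fun y => Real.log (Real.sinh (Real.sqrt (-(K / (N - 1))) * y) / Real.sqrt (-(K / (N - 1)))) := by
      funext y; rw [sk, if_neg (by linarith), if_neg (by linarith)]
    have hsinh : 0 < Real.sinh (Real.sqrt (-(K / (N - 1))) * x) :=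
      Real.sinh_pos_iff.2 (by positivity)
    rw [hfun]
    convert hasDerivAt_log_sinh_div _ x hs hsinh using 1
    have hval : Real.sqrt (-K * (N - 1)) = Real.sqrt (-(K / (N - 1))) * (N - 1) := by
      have e : -K * (N - 1) = (-(K / (N - 1))) * (N - 1) ^ 2 := by field_simp
      rw [e, Real.sqrt_mul (by linarith), Real.sqrt_sq hN1.le]
    have hnd : -K / (N - 1) = -(K / (N - 1)) := by ring
    rw [cotKN, if_neg (by linarith), if_neg (by linarith), hval, hnd,
      mul_div_div_cancel' _ _ _ _ (by linarith : N - 1 ≠ 0)]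
  · -- K = 0
    subst hK
    have hfun : (fun y => Real.log (sk ((0:ℝ) / (N - 1)) y)) = Real.log := by
      funext y; rw [sk, zero_div, if_neg (lt_irrefl 0), if_pos rfl]
    rw [hfun]
    convert Real.hasDerivAt_log (ne_of_gt hx) using 1
    rw [cotKN, if_neg (lt_irrefl 0), if_pos rfl]
    rw [div_div, mul_comm, ← div_div, div_self (by linarith : N - 1 ≠ 0), one_div]
  · -- K > 0
    have hκ : 0 < K / (N - 1) := div_pos hK hN1
    have hs : 0 < Real.sqrt (K / (N - 1)) := Real.sqrt_pos.2 hκ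
    have hfun : (fun y => Real.log (sk (K / (N - 1)) y))
        = fun y => Real.log (Real.sin (Real.sqrt (K / (N - 1)) * y) / Real.sqrt (K / (N - 1))) := by
      funext y; rw [sk, if_pos hκ]
    have hsin : 0 < Real.sin (Real.sqrt (K / (N - 1)) * x) :=
      Real.sin_pos_of_pos_of_lt_pi (by positivity) (hπ hK)
    rw [hfun]
    convert hasDerivAt_log_sin_div _ x hs hsin using 1
    have hval : Real.sqrt (K * (N - 1)) = Real.sqrt (K / (N - 1)) * (N - 1) := by
      have e : K * (N - 1) = (K / (N - 1)) * (N - 1) ^ 2 := by field_simp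
      rw [e, Real.sqrt_mul hκ.le, Real.sqrt_sq hN1.le]
    rw [cotKN, if_pos hK, hval,
      mul_div_div_cancel' _ _ _ _ (by linarith : N - 1 ≠ 0)]

/-- a differentiable positive density `h` on `(0,D)` satisfies the
MCP(K,N) density condition iff
`-h(x)·cot_{K,N}(D-x) ≤ h'(x) ≤ h(x)·cot_{K,N}(x)` on `(0,D)`. -/
theorem mcpCond_iff_deriv (K N D : ℝ) (hN : 1 < N) (hD : 0 < D)
    (hDKN : 0 < K → D ≤ Real.pi / Real.sqrt (K / (N - 1)))
    (h : ℝ → ℝ) (hdiff : ∀ x ∈ Set.Ioo 0 D, DifferentiableAt ℝ h x)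
    (hpos : ∀ x ∈ Set.Ioo 0 D, 0 < h x) :
    mcpCond K N D h ↔
      ∀ x ∈ Set.Ioo 0 D,
        -h x * cotKN K N (D - x) ≤ deriv h x ∧ deriv h x ≤ h x * cotKN K N x := by
  have hN1 : (0:ℝ) < N - 1 := by linarith
  -- angle bound
  have hπ : ∀ x ∈ Set.Ioo 0 D, (0 < K → Real.sqrt (K / (N - 1)) * x < Real.pi) := by
    intro x hx hK
    have hκ : 0 < K / (N - 1) := div_pos hK hN1
    have hs : 0 < Real.sqrt (K / (N - 1)) := Real.sqrt_pos.2 hκ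
    calc Real.sqrt (K / (N - 1)) * x < Real.sqrt (K / (N - 1)) * D := by
          exact mul_lt_mul_of_pos_left hx.2 hs
      _ ≤ Real.sqrt (K / (N - 1)) * (Real.pi / Real.sqrt (K / (N - 1))) :=
          mul_le_mul_of_nonneg_left (hDKN hK) hs.le
      _ = Real.pi := by field_simp
  have hmem : ∀ x ∈ Set.Ioo 0 D, D - x ∈ Set.Ioo 0 D := by
    intro x hx; exact ⟨by linarith [hx.2], by linarith [hx.1]⟩
  have hsk : ∀ x ∈ Set.Ioo 0 D, 0 < sk (K / (N - 1)) x := by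
    intro x hx; exact sk_pos_s7 K N x hN hx.1 (hπ x hx)
  set φ : ℝ → ℝ := fun y => Real.log (h y) - (N - 1) * Real.log (sk (K / (N - 1)) y) with hφdef
  set ψ : ℝ → ℝ := fun y => Real.log (h y) - (N - 1) * Real.log (sk (K / (N - 1)) (D - y))
    with hψdef
  have hφd : ∀ x ∈ Set.Ioo 0 D,
      HasDerivAt φ (deriv h x / h x - cotKN K N x) x := by
    intro x hx
    have h1 := ((hdiff x hx).hasDerivAt).log (hpos x hx).ne'
    have h2 := (hasDerivAt_log_sk K N x hN hx.1 (hπ x hx)).const_mul (N - 1)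
    have := h1.sub h2
    rw [mul_div_cancel₀ _ (by linarith : N - 1 ≠ 0)] at this
    exact this
  have hψd : ∀ x ∈ Set.Ioo 0 D,
      HasDerivAt ψ (deriv h x / h x + cotKN K N (D - x)) x := by
    intro x hx
    have h1 := ((hdiff x hx).hasDerivAt).log (hpos x hx).ne'
    have hin : HasDerivAt (fun y => D - y) (-1 : ℝ) x := by
      simpa using (hasDerivAt_id x).const_sub D
    have h2 := ((hasDerivAt_log_sk K N (D - x) hN (hmem x hx).1
      (hπ _ (hmem x hx))).comp x hin).const_mul (N - 1)
    have h3 := h1.sub h2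
    have e : deriv h x / h x - (N - 1) * (cotKN K N (D - x) / (N - 1) * (-1))
        = deriv h x / h x + cotKN K N (D - x) := by
      field_simp
      ring
    rw [e] at h3
    exact h3
  -- pointwise reformulations of the ratio conditions
  have ratio_right : ∀ x₀ ∈ Set.Ioo 0 D, ∀ x₁ ∈ Set.Ioo 0 D,
      (h x₁ / h x₀ ≤ (sk (K / (N - 1)) x₁ / sk (K / (N - 1)) x₀) ^ (N - 1) ↔ φ x₁ ≤ φ x₀) := by
    intro x₀ h₀ x₁ h₁
    have ha : 0 < h x₁ / h x₀ := div_pos (hpos _ h₁) (hpos _ h₀)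
    have hb : 0 < sk (K / (N - 1)) x₁ / sk (K / (N - 1)) x₀ := div_pos (hsk _ h₁) (hsk _ h₀)
    rw [← Real.log_le_log_iff ha (Real.rpow_pos_of_pos hb _), Real.log_rpow hb,
      Real.log_div (hpos _ h₁).ne' (hpos _ h₀).ne', Real.log_div (hsk _ h₁).ne' (hsk _ h₀).ne',
      hφdef]
    constructor <;> intro H <;> nlinarith [H]
  have ratio_left : ∀ x₀ ∈ Set.Ioo 0 D, ∀ x₁ ∈ Set.Ioo 0 D,
      ((sk (K / (N - 1)) (D - x₁) / sk (K / (N - 1)) (D - x₀)) ^ (N - 1) ≤ h x₁ / h x₀ ↔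
        ψ x₀ ≤ ψ x₁) := by
    intro x₀ h₀ x₁ h₁
    have ha : 0 < h x₁ / h x₀ := div_pos (hpos _ h₁) (hpos _ h₀)
    have hb : 0 < sk (K / (N - 1)) (D - x₁) / sk (K / (N - 1)) (D - x₀) :=
      div_pos (hsk _ (hmem _ h₁)) (hsk _ (hmem _ h₀))
    rw [← Real.log_le_log_iff (Real.rpow_pos_of_pos hb _) ha, Real.log_rpow hb,
      Real.log_div (hpos _ h₁).ne' (hpos _ h₀).ne',
      Real.log_div (hsk _ (hmem _ h₁)).ne' (hsk _ (hmem _ h₀)).ne', hψdef]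
    constructor <;> intro H <;> nlinarith [H]
  -- pointwise reformulations of the derivative conditions
  have key_right : ∀ x ∈ Set.Ioo 0 D,
      (deriv h x ≤ h x * cotKN K N x ↔ deriv h x / h x - cotKN K N x ≤ 0) := by
    intro x hx
    rw [sub_nonpos, div_le_iff₀ (hpos x hx)]
    constructor <;> intro H <;> nlinarith [H]
  have key_left : ∀ x ∈ Set.Ioo 0 D,
      (-h x * cotKN K N (D - x) ≤ deriv h x ↔ 0 ≤ deriv h x / h x + cotKN K N (D - x)) := by
    intro x hx
    have hh := hpos x hx
    constructor <;> intro H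
    · have : -cotKN K N (D - x) ≤ deriv h x / h x := by
        rw [le_div_iff₀ hh]; nlinarith [H]
      linarith
    · have : -cotKN K N (D - x) ≤ deriv h x / h x := by linarith
      rw [le_div_iff₀ hh] at this; nlinarith [this]
  constructor
  · intro hmcp x hx
    have hφanti : AntitoneOn φ (Set.Ioo 0 D) := by
      intro x₀ h₀ x₁ h₁ h01
      exact (ratio_right x₀ h₀ x₁ h₁).1 (hmcp x₀ x₁ h₀.1 h01 h₁.2).2
    have hψmono : MonotoneOn ψ (Set.Ioo 0 D) := by
      intro x₀ h₀ x₁ h₁ h01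
      exact (ratio_left x₀ h₀ x₁ h₁).1 (hmcp x₀ x₁ h₀.1 h01 h₁.2).1
    constructor
    · exact (key_left x hx).2 (deriv_nonneg_of_monotoneOn' hx hψmono (hψd x hx))
    · exact (key_right x hx).2 (deriv_nonpos_of_antitoneOn' hx hφanti (hφd x hx))
  · intro hb x₀ x₁ h0 h01 h1
    have hx₀ : x₀ ∈ Set.Ioo 0 D := ⟨h0, lt_of_le_of_lt h01 h1⟩
    have hx₁ : x₁ ∈ Set.Ioo 0 D := ⟨lt_of_lt_of_le h0 h01, h1⟩
    have hφanti : AntitoneOn φ (Set.Ioo 0 D) := by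
      apply antitoneOn_of_deriv_nonpos (convex_Ioo 0 D)
      · intro x hx
        exact (hφd x hx).differentiableAt.continuousAt.continuousWithinAt
      · rw [interior_Ioo]
        intro x hx
        exact (hφd x hx).differentiableAt.differentiableWithinAt
      · rw [interior_Ioo]
        intro x hx
        rw [(hφd x hx).deriv]
        exact (key_right x hx).1 (hb x hx).2
    have hψmono : MonotoneOn ψ (Set.Ioo 0 D) := by
      apply monotoneOn_of_deriv_nonneg (convex_Ioo 0 D)
      · intro x hx
        exact (hψd x hx).differentiableAt.continuousAt.continuousWithinAt
      · rw [interior_Ioo]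
        intro x hx
        exact (hψd x hx).differentiableAt.differentiableWithinAt
      · rw [interior_Ioo]
        intro x hx
        rw [(hψd x hx).deriv]
        exact (key_left x hx).1 (hb x hx).1
    exact ⟨(ratio_left x₀ hx₀ x₁ hx₁).2 (hψmono hx₀ hx₁ h01),
      (ratio_right x₀ hx₀ x₁ hx₁).2 (hφanti hx₀ hx₁ h01)⟩
end

section
/- Let K ∈ ℝ, N > 1, 0 < D ≤ D_{K,N}, κ := K/(N-1). The symmetric model density h_{K,N,D} defined by h_{K,N,D}(x) := s_κ(D-x)^{N-1} for x ∈ (0, D/2] and h_{K,N,D}(x) := s_κ(x)^{N-1} for x ∈ [D/2, D) is well-defined (the two expressions agree at x = D/2) and satisfies the MCP(K,N) density condition on (0,D). -/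
open Real

/-- Positivity of `sk κ` on `(0, D)` when `√κ · D ≤ π` (in the positive case). -/
lemma sk_pos_aux (κ D x : ℝ) (hκD : 0 < κ → Real.sqrt κ * D ≤ π) (hx : 0 < x) (hxD : x < D) :
    0 < sk κ x := by
  unfold sk
  split_ifs with h1 h2
  · have hσ : 0 < Real.sqrt κ := Real.sqrt_pos.2 h1
    apply div_pos _ hσ
    apply Real.sin_pos_of_pos_of_lt_pi (by positivity)
    have := hκD h1
    nlinarith
  · exact hx
  · have hκ : 0 < -κ := by
      rcases lt_trichotomy κ 0 with h | h | h
      · linarith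
      · exact absurd h h2
      · exact absurd h h1
    have hσ : 0 < Real.sqrt (-κ) := Real.sqrt_pos.2 hκ
    exact div_pos (Real.sinh_pos_iff.2 (by positivity)) hσ

/-- The key product inequality for `sk`. -/
lemma sk_mul_le_aux (κ D u v : ℝ) (hκD : 0 < κ → Real.sqrt κ * D ≤ π)
    (hu : 0 < u) (huv : u ≤ v) (hv : v < D) :
    sk κ (D - v) * sk κ u ≤ sk κ (D - u) * sk κ v := by
  have hD : 0 < D := hu.trans_le (huv.trans hv.le)
  unfold sk
  split_ifs with h1 h2
  · set σ := Real.sqrt κ with hσdef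
    have hσ : 0 < σ := Real.sqrt_pos.2 h1
    have hπ : σ * D ≤ π := hκD h1
    have hnn : 0 ≤ Real.sin (σ * D) * Real.sin (σ * v - σ * u) := by
      apply mul_nonneg
      · exact Real.sin_nonneg_of_nonneg_of_le_pi (by positivity) hπ
      · apply Real.sin_nonneg_of_nonneg_of_le_pi
        · nlinarith
        · nlinarith
    have hid : Real.sin (σ * D - σ * u) * Real.sin (σ * v)
        - Real.sin (σ * D - σ * v) * Real.sin (σ * u)
        = Real.sin (σ * D) * Real.sin (σ * v - σ * u) := by
      rw [Real.sin_sub, Real.sin_sub, Real.sin_sub]; ring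
    have key : Real.sin (σ * (D - v)) * Real.sin (σ * u)
        ≤ Real.sin (σ * (D - u)) * Real.sin (σ * v) := by
      rw [mul_sub, mul_sub]; linarith
    rw [div_mul_div_comm, div_mul_div_comm]
    exact div_le_div_of_nonneg_right key (by positivity)
  · nlinarith
  · have hκ : 0 < -κ := by
      rcases lt_trichotomy κ 0 with h | h | h
      · linarith
      · exact absurd h h2
      · exact absurd h h1
    set σ := Real.sqrt (-κ) with hσdef
    have hσ : 0 < σ := Real.sqrt_pos.2 hκ
    have hnn : 0 ≤ Real.sinh (σ * D) * Real.sinh (σ * v - σ * u) := by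
      apply mul_nonneg
      · exact Real.sinh_nonneg_iff.2 (by positivity)
      · exact Real.sinh_nonneg_iff.2 (by nlinarith)
    have hid : Real.sinh (σ * D - σ * u) * Real.sinh (σ * v)
        - Real.sinh (σ * D - σ * v) * Real.sinh (σ * u)
        = Real.sinh (σ * D) * Real.sinh (σ * v - σ * u) := by
      rw [Real.sinh_sub, Real.sinh_sub, Real.sinh_sub]; ring
    have key : Real.sinh (σ * (D - v)) * Real.sinh (σ * u)
        ≤ Real.sinh (σ * (D - u)) * Real.sinh (σ * v) := by
      rw [mul_sub, mul_sub]; linarith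
    rw [div_mul_div_comm, div_mul_div_comm]
    exact div_le_div_of_nonneg_right key (by positivity)

/-- Symmetry inequality: on the left half, `sk κ y ≤ sk κ (D - y)`. -/
lemma sk_symm_le_aux (κ D y : ℝ) (hκD : 0 < κ → Real.sqrt κ * D ≤ π)
    (hy : 0 < y) (hy2 : y ≤ D / 2) : sk κ y ≤ sk κ (D - y) := by
  have h := sk_mul_le_aux κ D y (D - y) hκD hy (by linarith) (by linarith)
  rw [sub_sub_cancel] at h
  have h1 : 0 < sk κ y := sk_pos_aux κ D y hκD hy (by linarith)
  have h2 : 0 < sk κ (D - y) := sk_pos_aux κ D (D - y) hκD (by linarith) (by linarith)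
  nlinarith

lemma rpow_ratio_le_aux {a b c d e : ℝ} (ha : 0 ≤ a) (hb : 0 < b) (hc : 0 < c) (hd : 0 < d)
    (he : 0 ≤ e) (h : a * d ≤ c * b) : (a / b) ^ e ≤ c ^ e / d ^ e := by
  rw [← Real.div_rpow hc.le hd.le]
  exact Real.rpow_le_rpow (by positivity) ((div_le_div_iff₀ hb hd).2 h) he

lemma le_rpow_ratio_aux {a b c d e : ℝ} (hb : 0 < b) (hc : 0 < c) (hd : 0 < d)
    (he : 0 ≤ e) (h : c * b ≤ a * d) : c ^ e / d ^ e ≤ (a / b) ^ e := by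
  rw [← Real.div_rpow hc.le hd.le]
  exact Real.rpow_le_rpow (by positivity) ((div_le_div_iff₀ hd hb).2 h) he

/-- the symmetric model density `h_{K,N,D}` is well-defined (the
two expressions agree at `x = D/2`) and satisfies the MCP(K,N) density
condition on `(0,D)`. -/
theorem model_density_mcpCond (K N D : ℝ) (hN : 1 < N) (hD : 0 < D)
    (hDKN : 0 < K → D ≤ Real.pi / Real.sqrt (K / (N - 1))) :
    sk (K / (N - 1)) (D - D / 2) ^ (N - 1) = sk (K / (N - 1)) (D / 2) ^ (N - 1) ∧
    mcpCond K N D (fun x =>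
      if x ≤ D / 2 then sk (K / (N - 1)) (D - x) ^ (N - 1)
      else sk (K / (N - 1)) x ^ (N - 1)) := by
  have hN1 : 0 < N - 1 := by linarith
  set κ := K / (N - 1) with hκdef
  have hκD : 0 < κ → Real.sqrt κ * D ≤ π := by
    intro hκ
    have hK : 0 < K := by
      have := mul_pos hκ hN1
      rwa [hκdef, div_mul_cancel₀ _ hN1.ne'] at this
    have hσ : 0 < Real.sqrt κ := Real.sqrt_pos.2 hκ
    have := hDKN hK
    rw [le_div_iff₀ hσ] at this
    linarith [this]
  refine ⟨by rw [sub_half], ?_⟩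
  intro x₀ x₁ hx0 h01 hx1D
  have hx0D : x₀ < D := lt_of_le_of_lt h01 hx1D
  have hx1 : 0 < x₁ := lt_of_lt_of_le hx0 h01
  have A0 : 0 < sk κ x₀ := sk_pos_aux κ D x₀ hκD hx0 hx0D
  have A1 : 0 < sk κ x₁ := sk_pos_aux κ D x₁ hκD hx1 hx1D
  have B0 : 0 < sk κ (D - x₀) := sk_pos_aux κ D (D - x₀) hκD (by linarith) (by linarith)
  have B1 : 0 < sk κ (D - x₁) := sk_pos_aux κ D (D - x₁) hκD (by linarith) (by linarith)
  have he : (0:ℝ) ≤ N - 1 := hN1.le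
  have hkey : sk κ (D - x₁) * sk κ x₀ ≤ sk κ (D - x₀) * sk κ x₁ :=
    sk_mul_le_aux κ D x₀ x₁ hκD hx0 h01 hx1D
  simp only
  by_cases hc0 : x₀ ≤ D / 2
  · by_cases hc1 : x₁ ≤ D / 2
    · rw [if_pos hc0, if_pos hc1]
      constructor
      · exact rpow_ratio_le_aux B1.le B0 B1 B0 he (le_refl _)
      · exact le_rpow_ratio_aux A0 B1 B0 he (hkey.trans_eq (mul_comm _ _))
    · rw [if_pos hc0, if_neg hc1]
      push_neg at hc1
      have hB1A1 : sk κ (D - x₁) ≤ sk κ x₁ := by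
        have := sk_symm_le_aux κ D (D - x₁) hκD (by linarith) (by linarith)
        rwa [sub_sub_cancel] at this
      have hA0B0 : sk κ x₀ ≤ sk κ (D - x₀) := sk_symm_le_aux κ D x₀ hκD hx0 hc0
      constructor
      · exact rpow_ratio_le_aux B1.le B0 A1 B0 he (mul_le_mul_of_nonneg_right hB1A1 B0.le)
      · exact le_rpow_ratio_aux A0 A1 B0 he (mul_le_mul_of_nonneg_left hA0B0 A1.le)
  · have hc1 : ¬ x₁ ≤ D / 2 := by push_neg at hc0 ⊢; linarith
    rw [if_neg hc0, if_neg hc1]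
    constructor
    · exact rpow_ratio_le_aux B1.le B0 A1 A0 he (hkey.trans_eq (mul_comm _ _))
    · exact le_rpow_ratio_aux A0 A1 A0 he (le_refl _)
end
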